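/- Let n ≥ 2 and let a_1, …, a_n be positive integers with a_1 ≥ 2 and a_n ≥ 2. Then for every index i with 1 ≤ i ≤ n, the continuant ⟨a_1, …, a_n⟩ (the denominator of [a_1, …, a_n] in lowest terms) satisfies ⟨a_1, …, a_n⟩ ≥ 2·a_i + 1. -/
import Mathlib


/-- The continuant `⟨a₁, …, aₙ⟩`, i.e. the denominator in lowest terms of the
continued fraction `[a₁, …, aₙ]`.  It satisfies `⟨⟩ = 1`, `⟨a⟩ = a`, and the
recursion `⟨a, b, l⟩ = a ⟨b, l⟩ + ⟨l⟩` (continuants are invariant under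
reversal, so the recursion may be taken from either end). -/
def continuant : List ℕ → ℕ
  | [] => 1
  | [a] => a
  | a :: b :: l => a * continuant (b :: l) + continuant l

lemma one_le_continuant : ∀ (L : List ℕ), (∀ x ∈ L, 0 < x) → 1 ≤ continuant L
  | [], _ => le_refl 1
  | [a], h => h a (by simp)
  | a :: b :: l, h => by
    have h1 := one_le_continuant (b :: l) (fun x hx => h x (by simp [hx]))
    have ha := h a (by simp)
    have := Nat.mul_le_mul ha h1
    simp only [continuant]
    omega

lemma le_continuant : ∀ (L : List ℕ), (∀ x ∈ L, 0 < x) → ∀ x ∈ L, x ≤ continuant L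
  | [], _, x, hx => by simp at hx
  | [a], _, x, hx => by simp at hx; simp [continuant, hx]
  | a :: b :: l, h, x, hx => by
    have h1 := one_le_continuant (b :: l) (fun y hy => h y (by simp [hy]))
    simp only [continuant]
    rcases List.mem_cons.1 hx with rfl | hx
    · calc x = x * 1 := by ring
        _ ≤ x * continuant (b :: l) + continuant l := by
            have := Nat.mul_le_mul_left x h1; omega
    · have := le_continuant (b :: l) (fun y hy => h y (by simp [hy])) x hx
      have ha := h a (by simp)
      have := Nat.mul_le_mul ha (le_refl (continuant (b :: l)))
      omega

/-- If `n ≥ 2`, all `aᵢ ≥ 1`, `a₁ ≥ 2` and `aₙ ≥ 2`, then for every entry `aᵢ`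
of the list one has `⟨a₁, …, aₙ⟩ ≥ 2 aᵢ + 1`. -/
theorem continuant_ge_two_mul_add_one (L : List ℕ) (hlen : 2 ≤ L.length)
    (hpos : ∀ x ∈ L, 0 < x) (hhead : 2 ≤ L.headI) (hlast : 2 ≤ L.getLastD 0) :
    ∀ x ∈ L, 2 * x + 1 ≤ continuant L := by
  match L with
  | a :: b :: l =>
    intro x hx
    have hposbl : ∀ y ∈ b :: l, 0 < y := fun y hy => hpos y (by simp [hy])
    have hposl : ∀ y ∈ l, 0 < y := fun y hy => hpos y (by simp [hy])
    have hl1 : 1 ≤ continuant l := one_le_continuant l hposl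
    have ha : 2 ≤ a := by simpa using hhead
    -- the last element of b :: l is ≥ 2 and is a member, so cont (b::l) ≥ 2
    have hlast' : (b :: l).getLastD 0 = (a :: b :: l).getLastD 0 := by
      simp [List.getLastD_cons]
    have hmem : (b :: l).getLastD 0 ∈ b :: l := by
      have : (b :: l).getLastD 0 = (b :: l).getLast (by simp) := by
        simp [List.getLastD_eq_getLast?, List.getLast?_eq_getLast]
      rw [this]
      exact List.getLast_mem _
    have h2 : 2 ≤ continuant (b :: l) := by
      have := le_continuant (b :: l) hposbl _ hmem
      omega
    simp only [continuant]
    rcases List.mem_cons.1 hx with rfl | hx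
    · have := Nat.mul_le_mul_left x h2
      omega
    · have hxle := le_continuant (b :: l) hposbl x hx
      have := Nat.mul_le_mul ha hxle
      omega
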